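/- Let B ∈ ℝ³, ε ∈ (0,1], M = (1/ε)B̃, and let F: ℝ³ → ℝ³ be continuously differentiable with F and its derivative bounded. Let x solve ẍ = M ẋ + F(x) on an interval containing [t₀, t₀+h] with ‖ẋ(t)‖ ≤ C₀ there. Then there exists a constant C > 0, depending only on B, C₀ and the bounds on F and its derivative (not on ε, h, t₀ or τ), such that for all 0 < h ≤ ε and all τ ∈ [0,1] the stage discrepancy of the second-order method (Algorithm 3.2) satisfies ‖x(t₀+τh) − x(t₀) − τh φ₁(τhM) ẋ(t₀) − h² ∫₀¹ ((τ−σ)/2) φ₁((τ−σ)hM) F(x(t₀+σh)) dσ‖ ≤ C h². -/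

import Mathlib

open MeasureTheory intervalIntegral

noncomputable section

attribute [local instance] Matrix.linftyOpNormedAddCommGroup Matrix.linftyOpNormedRing
  Matrix.linftyOpNormedAlgebra

abbrev E3 := EuclideanSpace ℝ (Fin 3)

/-- Action of a real 3×3 matrix on `ℝ³`. -/
def mvec (A : Matrix (Fin 3) (Fin 3) ℝ) (v : E3) : E3 := Matrix.toEuclideanLin A v

/-- Cross-product (skew-symmetric) matrix `b̃` of a vector `b`, so that `v × b = b̃ v`. -/
def crossMat (b : E3) : Matrix (Fin 3) (Fin 3) ℝ :=
  Matrix.of ![![0, b 2, -(b 1)], ![-(b 2), 0, b 0], ![b 1, -(b 0), 0]]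

/-- The matrix φ-functions: `φ₀(Z) = e^Z`, and
`φ_k(Z) = ∫₀¹ e^{(1-σ)Z} σ^{k-1}/(k-1)! dσ` for `k ≥ 1`. -/
def phi (k : ℕ) (Z : Matrix (Fin 3) (Fin 3) ℝ) : Matrix (Fin 3) (Fin 3) ℝ :=
  if k = 0 then NormedSpace.exp Z
  else ∫ σ in (0:ℝ)..1, (σ ^ (k - 1) / (Nat.factorial (k - 1))) • NormedSpace.exp ((1 - σ) • Z)

/-- The continuous-stage equation
`X_τ = xₙ + τh φ₁(τhM) vₙ + h² ∫₀¹ a(τ,σ) φ₁((τ-σ)hM) F(X_σ) dσ` for `τ ∈ [0,1]`. -/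
def stageEq (a : ℝ → ℝ → ℝ) (M : Matrix (Fin 3) (Fin 3) ℝ) (F : E3 → E3) (h : ℝ)
    (xn vn : E3) (X : ℝ → E3) : Prop :=
  ∀ τ ∈ Set.Icc (0:ℝ) 1,
    X τ = xn + (τ * h) • mvec (phi 1 ((τ * h) • M)) vn
      + h ^ 2 • ∫ σ in (0:ℝ)..1, a τ σ • mvec (phi 1 (((τ - σ) * h) • M)) (F (X σ))

/-- The update equations
`xₙ₊₁ = xₙ + h φ₁(hM) vₙ + h² ∫₀¹ (1-τ) φ₁((1-τ)hM) F(X_τ) dτ` and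
`vₙ₊₁ = φ₀(hM) vₙ + h ∫₀¹ φ₀((1-τ)hM) F(X_τ) dτ`. -/
def updEq (M : Matrix (Fin 3) (Fin 3) ℝ) (F : E3 → E3) (h : ℝ)
    (xn vn xn1 vn1 : E3) (X : ℝ → E3) : Prop :=
  xn1 = xn + h • mvec (phi 1 (h • M)) vn
      + h ^ 2 • ∫ τ in (0:ℝ)..1, (1 - τ) • mvec (phi 1 (((1 - τ) * h) • M)) (F (X τ))
  ∧ vn1 = mvec (phi 0 (h • M)) vn
      + h • ∫ τ in (0:ℝ)..1, mvec (phi 0 (((1 - τ) * h) • M)) (F (X τ))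

/-!
Variation of constants. Along the exact solution, `g s = e^{-sM} ẋ(t₀ + s)` has derivative
`e^{-sM} F(x(t₀ + s))`, so `‖ẋ(t₀ + s) - e^{sM} ẋ(t₀)‖ = O(s)`; integrating once more gives
`x(t₀ + u) - x(t₀) - u φ₁(uM) ẋ(t₀) = O(u²)`, because `u φ₁(uM) = ∫₀ᵘ e^{sM} ds`. The quadrature
term is `O(h²)` on its face. Every exponential occurs at `sM` with `|s| ≤ h ≤ ε`, so its norm is at
most `e^{‖B̃‖}` (Euclidean operator norm), uniformly in `ε`.
-/

open Set NormedSpace Matrix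

section NormedAlgebra

variable {𝔸 : Type*} [NormedRing 𝔸] [NormedAlgebra ℝ 𝔸] [CompleteSpace 𝔸]

theorem norm_exp_le_exp_norm [NormOneClass 𝔸] (a : 𝔸) : ‖exp a‖ ≤ Real.exp ‖a‖ := by
  rw [Real.exp_eq_exp_ℝ]
  refine (exp_series_hasSum_exp' (𝕂 := ℝ) a).norm_le_of_bounded
    (exp_series_hasSum_exp' (𝕂 := ℝ) ‖a‖) fun n => ?_
  rw [norm_smul, smul_eq_mul, Real.norm_of_nonneg (by positivity)]
  gcongr
  exact norm_pow_le a n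

theorem continuous_exp_smul (a : 𝔸) : Continuous fun t : ℝ => exp (t • a) :=
  continuous_iff_continuousAt.2 fun t => (hasDerivAt_exp_smul_const a t).continuousAt

theorem exp_smul_mul_exp_neg_smul (a : 𝔸) (t : ℝ) : exp (t • a) * exp (-t • a) = 1 := by
  have hmem : ∀ b : 𝔸, b ∈ Metric.eball 0 (expSeries ℝ 𝔸).radius := fun b =>
    (expSeries_radius_eq_top ℝ 𝔸).symm ▸ edist_lt_top _ _
  rw [← exp_add_of_commute_of_mem_ball ((Commute.refl a).smul_left t |>.smul_right _) (hmem _)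
    (hmem _), ← add_smul, add_neg_cancel, zero_smul, exp_zero]

end NormedAlgebra

section LinearODE

variable {E : Type*} [NormedAddCommGroup E] [NormedSpace ℝ E] [CompleteSpace E]

theorem norm_exp_apply_le (A : E →L[ℝ] E) (w : E) : ‖exp A w‖ ≤ Real.exp ‖A‖ * ‖w‖ := by
  rcases subsingleton_or_nontrivial E with _ | _
  · simp [Subsingleton.elim w 0]
  · exact ((exp A).le_opNorm w).trans (by gcongr; exact norm_exp_le_exp_norm A)

theorem norm_sub_exp_smul_apply_le {A : E →L[ℝ] E} {v f : ℝ → E} {c T : ℝ} (hT : 0 ≤ T)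
    (hv : ∀ t ∈ Icc 0 T, HasDerivAt v (A (v t) + f t) t) (hf : ∀ t ∈ Icc 0 T, ‖f t‖ ≤ c) :
    ‖v T - exp (T • A) (v 0)‖ ≤ Real.exp (T * ‖A‖) ^ 2 * c * T := by
  set g : ℝ → E := fun t => exp (-t • A) (v t)
  have hg : ∀ t ∈ Icc 0 T, HasDerivAt g (exp (-t • A) (f t)) t := by
    intro t ht
    have he : HasDerivAt (fun t : ℝ => exp (-t • A)) (exp (-t • A) * -A) t := by
      simpa [Function.comp_def, neg_smul] using
        (hasDerivAt_exp_smul_const A (-t)).scomp t (hasDerivAt_neg t)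
    convert he.clm_apply (hv t ht) using 1
    simp [map_add]
  have hg' : ∀ t ∈ Ico 0 T, ‖exp (-t • A) (f t)‖ ≤ Real.exp (T * ‖A‖) * c := by
    intro t ht
    refine (norm_exp_apply_le _ _).trans (mul_le_mul ?_ (hf t (Ico_subset_Icc_self ht))
      (norm_nonneg _) (Real.exp_pos _).le)
    rw [Real.exp_le_exp, norm_smul, Real.norm_eq_abs, abs_neg, abs_of_nonneg ht.1]
    gcongr
    exact ht.2.le
  have hgT := norm_image_sub_le_of_norm_deriv_le_segment'
    (fun t ht => (hg t ht).hasDerivWithinAt) hg' T (right_mem_Icc.2 hT)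
  have hvT : v T - exp (T • A) (v 0) = exp (T • A) (g T - g 0) := by
    simp only [g, map_sub, neg_zero, zero_smul, exp_zero, one_apply_eq_self]
    rw [← mul_apply_eq_comp, show exp (T • A) * exp (-T • A) = 1 from exp_smul_mul_exp_neg_smul A T,
      one_apply_eq_self]
  calc ‖v T - exp (T • A) (v 0)‖
      ≤ Real.exp (T * ‖A‖) * (Real.exp (T * ‖A‖) * c * (T - 0)) := by
        rw [hvT]
        refine (norm_exp_apply_le _ _).trans (mul_le_mul ?_ hgT (norm_nonneg _) (Real.exp_pos _).le)
        rw [norm_smul, Real.norm_of_nonneg hT]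
    _ = Real.exp (T * ‖A‖) ^ 2 * c * T := by ring

theorem norm_sub_sub_integral_exp_smul_apply_le {A : E →L[ℝ] E} {x v f : ℝ → E} {c T : ℝ}
    (hT : 0 ≤ T) (hx : ∀ t ∈ Icc 0 T, HasDerivAt x (v t) t)
    (hv : ∀ t ∈ Icc 0 T, HasDerivAt v (A (v t) + f t) t) (hf : ∀ t ∈ Icc 0 T, ‖f t‖ ≤ c) :
    ‖x T - x 0 - ∫ s in 0..T, exp (s • A) (v 0)‖ ≤ Real.exp (T * ‖A‖) ^ 2 * c * T ^ 2 := by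
  have hc : 0 ≤ c := (norm_nonneg _).trans (hf 0 (left_mem_Icc.2 hT))
  have hcont : Continuous fun s : ℝ => exp (s • A) (v 0) :=
    (continuous_exp_smul A).clm_apply continuous_const
  have hy : ∀ t ∈ Icc 0 T, HasDerivAt (fun t => x t - ∫ s in 0..t, exp (s • A) (v 0))
      (v t - exp (t • A) (v 0)) t :=
    fun t ht => (hx t ht).sub (hcont.integral_hasStrictDerivAt 0 t).hasDerivAt
  have hy' : ∀ t ∈ Ico 0 T, ‖v t - exp (t • A) (v 0)‖ ≤ Real.exp (T * ‖A‖) ^ 2 * c * T := by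
    intro t ht
    have hsub : Icc 0 t ⊆ Icc 0 T := Icc_subset_Icc_right ht.2.le
    refine (norm_sub_exp_smul_apply_le ht.1 (fun s hs => hv s (hsub hs))
      (fun s hs => hf s (hsub hs))).trans ?_
    gcongr <;> linarith [ht.1, ht.2]
  have := norm_image_sub_le_of_norm_deriv_le_segment'
    (fun t ht => (hy t ht).hasDerivWithinAt) hy' T (right_mem_Icc.2 hT)
  rw [sub_right_comm]
  simpa [sq, mul_assoc] using this

end LinearODE

theorem continuous_toEuclideanCLM {n : Type*} [Fintype n] [DecidableEq n] :
    Continuous (toEuclideanCLM (𝕜 := ℝ) (n := n)) :=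
  LinearMap.continuous_of_finiteDimensional
    (toEuclideanCLM (𝕜 := ℝ) (n := n)).toAlgEquiv.toLinearMap

theorem toEuclideanCLM_exp {n : Type*} [Fintype n] [DecidableEq n] (Z : Matrix n n ℝ) :
    toEuclideanCLM (𝕜 := ℝ) (exp Z) = exp (toEuclideanCLM (𝕜 := ℝ) Z) :=
  map_exp_of_mem_ball (𝕂 := ℝ) (toEuclideanCLM (𝕜 := ℝ) (n := n)) continuous_toEuclideanCLM Z
    ((expSeries_radius_eq_top ℝ (Matrix n n ℝ)).symm ▸ edist_lt_top _ _)

theorem toEuclideanCLM_phi_one (Z : Matrix (Fin 3) (Fin 3) ℝ) :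
    toEuclideanCLM (𝕜 := ℝ) (phi 1 Z) = ∫ σ in (0:ℝ)..1, exp (σ • toEuclideanCLM (𝕜 := ℝ) Z) := by
  let L : Matrix (Fin 3) (Fin 3) ℝ →L[ℝ] (E3 →L[ℝ] E3) :=
    (toEuclideanCLM (𝕜 := ℝ) (n := Fin 3)).toAlgEquiv.toLinearMap.toContinuousLinearMap
  have hcont : Continuous fun σ : ℝ => exp ((1 - σ) • Z) :=
    (continuous_exp_smul Z).comp (continuous_const.sub continuous_id)
  calc toEuclideanCLM (𝕜 := ℝ) (phi 1 Z) = L (∫ σ in (0:ℝ)..1, exp ((1 - σ) • Z)) := by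
        simp [phi, L]
    _ = ∫ σ in (0:ℝ)..1, exp ((1 - σ) • toEuclideanCLM (𝕜 := ℝ) Z) := by
        refine (L.intervalIntegral_comp_comm (hcont.intervalIntegrable _ _)).symm.trans ?_
        congr 1; funext σ
        exact (toEuclideanCLM_exp ((1 - σ) • Z)).trans (by rw [map_smul])
    _ = ∫ σ in (0:ℝ)..1, exp (σ • toEuclideanCLM (𝕜 := ℝ) Z) := by
        simpa using intervalIntegral.integral_comp_sub_left (a := 0) (b := 1)
          (fun σ => exp (σ • toEuclideanCLM (𝕜 := ℝ) Z)) 1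

theorem smul_mvec_phi_one_smul (M : Matrix (Fin 3) (Fin 3) ℝ) (u : ℝ) (w : E3) :
    u • mvec (phi 1 (u • M)) w = ∫ s in (0:ℝ)..u, exp (s • toEuclideanCLM (𝕜 := ℝ) M) w := by
  have hcont : Continuous fun σ : ℝ => exp (σ • toEuclideanCLM (𝕜 := ℝ) (u • M)) :=
    continuous_exp_smul (toEuclideanCLM (𝕜 := ℝ) (u • M))
  rw [mvec, ← coe_toEuclideanCLM_eq_toEuclideanLin, ContinuousLinearMap.coe_coe,
    toEuclideanCLM_phi_one,
    ContinuousLinearMap.intervalIntegral_apply (hcont.intervalIntegrable _ _)]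
  simpa [smul_smul] using intervalIntegral.smul_integral_comp_mul_right (a := 0) (b := 1)
    (fun s => exp (s • toEuclideanCLM (𝕜 := ℝ) M) w) u

theorem norm_mvec_phi_one_le (Z : Matrix (Fin 3) (Fin 3) ℝ) (w : E3) :
    ‖mvec (phi 1 Z) w‖ ≤ Real.exp ‖toEuclideanCLM (𝕜 := ℝ) Z‖ * ‖w‖ := by
  have hZ := smul_mvec_phi_one_smul Z 1 w
  rw [one_smul, one_smul] at hZ
  rw [hZ]
  refine (intervalIntegral.norm_integral_le_of_norm_le_const fun s hs => ?_).trans_eq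
    (by rw [sub_zero, abs_one, mul_one])
  rw [uIoc_of_le zero_le_one] at hs
  refine (norm_exp_apply_le _ _).trans ?_
  gcongr
  rw [norm_smul, Real.norm_of_nonneg hs.1.le]
  exact mul_le_of_le_one_left (norm_nonneg _) hs.2

theorem norm_sub_sub_smul_mvec_phi_one_le {M : Matrix (Fin 3) (Fin 3) ℝ} {F : E3 → E3}
    {x : ℝ → E3} {t₀ T c : ℝ} (hT : 0 ≤ T) (hx : ContDiff ℝ 2 x)
    (hODE : ∀ t ∈ Icc t₀ (t₀ + T), deriv (deriv x) t = mvec M (deriv x t) + F (x t))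
    (hF : ∀ t ∈ Icc t₀ (t₀ + T), ‖F (x t)‖ ≤ c) :
    ‖x (t₀ + T) - x t₀ - T • mvec (phi 1 (T • M)) (deriv x t₀)‖
      ≤ Real.exp (T * ‖toEuclideanCLM (𝕜 := ℝ) M‖) ^ 2 * c * T ^ 2 := by
  have hx₂ := (contDiff_succ_iff_deriv (n := 1)).mp hx
  have hmem : ∀ s ∈ Icc 0 T, t₀ + s ∈ Icc t₀ (t₀ + T) := fun s hs =>
    ⟨by linarith [hs.1], by linarith [hs.2]⟩
  have hsol : ∀ s ∈ Icc 0 T, HasDerivAt (fun s => deriv x (t₀ + s))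
      (toEuclideanCLM (𝕜 := ℝ) M (deriv x (t₀ + s)) + F (x (t₀ + s))) s := by
    intro s hs
    have hvs := (hx₂.2.2.differentiable one_ne_zero (t₀ + s)).hasDerivAt.comp_const_add t₀ s
    rw [hODE (t₀ + s) (hmem s hs)] at hvs
    exact hvs
  have h := norm_sub_sub_integral_exp_smul_apply_le hT
    (fun s _ => (hx₂.1 (t₀ + s)).hasDerivAt.comp_const_add t₀ s) hsol fun s hs => hF _ (hmem s hs)
  rwa [add_zero, ← smul_mvec_phi_one_smul] at h

theorem norm_integral_stage_le (M : Matrix (Fin 3) (Fin 3) ℝ) (G : ℝ → E3) {τ h K c : ℝ}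
    (hτ : τ ∈ Icc (0:ℝ) 1) (hh : 0 ≤ h) (hK : h * ‖toEuclideanCLM (𝕜 := ℝ) M‖ ≤ K)
    (hG : ∀ σ ∈ Icc (0:ℝ) 1, ‖G σ‖ ≤ c) :
    ‖∫ σ in (0:ℝ)..1, ((τ - σ) / 2) • mvec (phi 1 (((τ - σ) * h) • M)) (G σ)‖
      ≤ Real.exp K * c / 2 := by
  refine (intervalIntegral.norm_integral_le_of_norm_le_const fun σ hσ => ?_).trans_eq
    (by rw [sub_zero, abs_one, mul_one])
  rw [uIoc_of_le zero_le_one] at hσ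
  have hτσ : |τ - σ| ≤ 1 := abs_sub_le_iff.2 ⟨by linarith [hτ.2, hσ.1], by linarith [hτ.1, hσ.2]⟩
  have hGσ := hG σ (Ioc_subset_Icc_self hσ)
  have hc : 0 ≤ c := (norm_nonneg _).trans hGσ
  have hexp : Real.exp ‖toEuclideanCLM (𝕜 := ℝ) (((τ - σ) * h) • M)‖ ≤ Real.exp K := by
    rw [Real.exp_le_exp, map_smul, norm_smul, Real.norm_eq_abs, abs_mul, abs_of_nonneg hh]
    calc |τ - σ| * h * ‖toEuclideanCLM (𝕜 := ℝ) M‖ ≤ 1 * h * ‖toEuclideanCLM (𝕜 := ℝ) M‖ := by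
          gcongr
      _ ≤ K := by rw [one_mul]; exact hK
  calc ‖((τ - σ) / 2) • mvec (phi 1 (((τ - σ) * h) • M)) (G σ)‖
      = |τ - σ| / 2 * ‖mvec (phi 1 (((τ - σ) * h) • M)) (G σ)‖ := by
        rw [norm_smul, Real.norm_eq_abs, abs_div, abs_two]
    _ ≤ 1 / 2 * (Real.exp K * c) := by
        gcongr
        exact (norm_mvec_phi_one_le _ _).trans (by gcongr)
    _ = Real.exp K * c / 2 := by ring

/-- stage discrepancy of the second-order method, Algorithm 3.2. -/
theorem stmt19 (B : E3) (C₀ CF : ℝ) :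
    ∃ C : ℝ, 0 < C ∧
      ∀ F : E3 → E3, ContDiff ℝ 1 F →
        (∀ y, ‖F y‖ ≤ CF ∧ ‖iteratedFDeriv ℝ 1 F y‖ ≤ CF) →
      ∀ ε : ℝ, 0 < ε → ε ≤ 1 →
      ∀ t₀ h : ℝ, 0 < h → h ≤ ε →
      ∀ x : ℝ → E3, ContDiff ℝ 2 x →
        (∀ t ∈ Set.Icc t₀ (t₀ + h),
          deriv (deriv x) t = mvec ((1 / ε) • crossMat B) (deriv x t) + F (x t)) →
        (∀ t ∈ Set.Icc t₀ (t₀ + h), ‖deriv x t‖ ≤ C₀) →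
      ∀ τ ∈ Set.Icc (0:ℝ) 1,
        ‖x (t₀ + τ * h) - x t₀
            - (τ * h) • mvec (phi 1 ((τ * h) • ((1 / ε) • crossMat B))) (deriv x t₀)
            - h ^ 2 • ∫ σ in (0:ℝ)..1,
                ((τ - σ) / 2) • mvec (phi 1 (((τ - σ) * h) • ((1 / ε) • crossMat B)))
                  (F (x (t₀ + σ * h)))‖
          ≤ C * h ^ 2 := by
  set K := ‖toEuclideanCLM (𝕜 := ℝ) (crossMat B)‖
  refine ⟨(Real.exp K ^ 2 + Real.exp K / 2) * max CF 1, by positivity, ?_⟩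
  intro F _ hF ε hε _ t₀ h hh hhε x hx hODE _ τ hτ
  set M := (1 / ε) • crossMat B
  have hhM : h * ‖toEuclideanCLM (𝕜 := ℝ) M‖ ≤ K := by
    rw [map_smul, norm_smul, Real.norm_of_nonneg (one_div_pos.2 hε).le, ← mul_assoc, mul_one_div]
    exact mul_le_of_le_one_left (norm_nonneg _) ((div_le_one hε).2 hhε)
  have hCF : 0 ≤ CF := (norm_nonneg _).trans (hF 0).1
  have hτh : τ * h ∈ Icc 0 h := ⟨by nlinarith [hτ.1], mul_le_of_le_one_left hh.le hτ.2⟩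
  have h_free := norm_sub_sub_smul_mvec_phi_one_le hτh.1 hx
    (fun t ht => hODE t ⟨ht.1, by linarith [ht.2, hτh.2]⟩) fun t _ => (hF _).1
  have h_forced := norm_integral_stage_le M (fun σ => F (x (t₀ + σ * h))) hτ hh.le hhM
    fun σ _ => (hF _).1
  refine (norm_sub_le _ _).trans ?_
  rw [norm_smul, Real.norm_of_nonneg (by positivity)]
  calc _ ≤ Real.exp K ^ 2 * CF * h ^ 2 + h ^ 2 * (Real.exp K * CF / 2) := by
        refine add_le_add (h_free.trans ?_) (by gcongr)
        gcongr
        · exact (mul_le_mul_of_nonneg_right hτh.2 (norm_nonneg _)).trans hhM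
        · exact hτh.1
        · exact hτh.2
    _ = (Real.exp K ^ 2 + Real.exp K / 2) * CF * h ^ 2 := by ring
    _ ≤ (Real.exp K ^ 2 + Real.exp K / 2) * max CF 1 * h ^ 2 := by
        gcongr
        exact le_max_left _ _
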